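/- Suppose 4λ ≥ 1 and ρ := η·(4λ)^{1/M} < 1. Then for all t ∈ ℕ the MHE estimation error satisfies ‖x̂_t − x_t‖_{P1} ≤ max{ 4·ρ^{t/2}·‖x̂_0 − x_0‖_{P2}, max_{q∈{0,…,t−1}} (4/(1−ρ^{1/4}))·ρ^{q/4}·‖w_{t−q−1}‖_Q }; i.e. the moving horizon estimator is robustly globally exponentially stable (Corollary 1). -/

import Mathlib

open Matrix Finset

/-- Quadratic form `‖v‖_S² = vᵀ S v` associated with a square matrix `S`. -/
noncomputable def quadNorm {ι : Type*} [Fintype ι] (S : Matrix ι ι ℝ) (v : ι → ℝ) : ℝ :=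
  v ⬝ᵥ S.mulVec v

lemma quadNorm_nonneg {ι : Type*} [Fintype ι] {S : Matrix ι ι ℝ} (hS : S.PosSemidef)
    (v : ι → ℝ) : 0 ≤ quadNorm S v := by
  simpa [quadNorm] using hS.dotProduct_mulVec_nonneg v

lemma quadNorm_neg' {ι : Type*} [Fintype ι] (S : Matrix ι ι ℝ) (v : ι → ℝ) :
    quadNorm S (-v) = quadNorm S v := by
  simp [quadNorm, Matrix.mulVec_neg]

lemma quadNorm_sub_le {ι : Type*} [Fintype ι] {S : Matrix ι ι ℝ} (hS : S.PosSemidef)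
    (a b : ι → ℝ) : quadNorm S (a - b) ≤ 2 * quadNorm S a + 2 * quadNorm S b := by
  have key : quadNorm S (a - b) + quadNorm S (a + b) = 2 * quadNorm S a + 2 * quadNorm S b := by
    simp only [quadNorm, Matrix.mulVec_add, Matrix.mulVec_sub, dotProduct_add, dotProduct_sub,
      add_dotProduct, sub_dotProduct]
    ring
  have := quadNorm_nonneg hS (a + b)
  linarith

lemma geom_le' {r : ℝ} (h0 : 0 ≤ r) (h1 : r < 1) (n : ℕ) :
    ∑ i ∈ Finset.range n, r ^ i ≤ 1 / (1 - r) := by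
  have h2 : 0 < 1 - r := by linarith
  have key : (1 - r) * ∑ i ∈ Finset.range n, r ^ i = 1 - r ^ n := by
    induction n with
    | zero => simp
    | succ k ih => rw [Finset.sum_range_succ, mul_add, ih, pow_succ]; ring
  have h3 : ∑ i ∈ Finset.range n, r ^ i = (1 - r ^ n) / (1 - r) := by
    rw [eq_div_iff (ne_of_gt h2)]; linarith [key]
  rw [h3, div_le_div_iff₀ h2 h2]
  have : 0 ≤ r ^ n := pow_nonneg h0 n
  nlinarith

lemma sum_Icc_one (N : ℕ) (g : ℕ → ℝ) :
    ∑ j ∈ Finset.Icc 1 N, g j = ∑ i ∈ Finset.range N, g (i + 1) := by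
  induction N with
  | zero => simp
  | succ N ih => rw [Finset.sum_Icc_succ_top (by omega), ih, Finset.sum_range_succ]


set_option maxHeartbeats 2000000 in
/-- Corollary 1: MHE is robustly globally exponentially stable.
If `4λ ≥ 1` and `ρ = η (4λ)^{1/M} < 1`, the MHE estimation error satisfies an exponential
max-based bound in the initial error and the past disturbances. -/
theorem MHE_is_RGES
    {n m q p : ℕ}
    (f : (Fin n → ℝ) → (Fin m → ℝ) → (Fin q → ℝ) → (Fin n → ℝ))
    (h : (Fin n → ℝ) → (Fin m → ℝ) → (Fin q → ℝ) → (Fin p → ℝ))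
    (X : Set (Fin n → ℝ)) (U : Set (Fin m → ℝ)) (Wset : Set (Fin q → ℝ)) (Y : Set (Fin p → ℝ))
    (W : (Fin n → ℝ) → (Fin n → ℝ) → ℝ)
    (P1 P2 : Matrix (Fin n) (Fin n) ℝ)
    (Q : Matrix (Fin q) (Fin q) ℝ) (R : Matrix (Fin p) (Fin p) ℝ)
    (η : ℝ) (hη0 : 0 ≤ η) (hη1 : η < 1)
    (hP1 : P1.PosDef) (hP2 : P2.PosDef) (hQ : Q.PosSemidef) (hR : R.PosSemidef)
    (hWlow : ∀ x xt, x ∈ X → xt ∈ X → quadNorm P1 (x - xt) ≤ W x xt)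
    (hWup : ∀ x xt, x ∈ X → xt ∈ X → W x xt ≤ quadNorm P2 (x - xt))
    (hdiss : ∀ x xt u w wt, x ∈ X → xt ∈ X → u ∈ U → w ∈ Wset → wt ∈ Wset →
      h x u w ∈ Y → h xt u wt ∈ Y →
      W (f x u w) (f xt u wt) ≤ η * W x xt + quadNorm Q (w - wt)
        + quadNorm R (h x u w - h xt u wt))
    -- horizon
    (M : ℕ) (hM : 1 ≤ M)
    -- true trajectory, defined for all times
    (u : ℕ → Fin m → ℝ) (x : ℕ → Fin n → ℝ) (w : ℕ → Fin q → ℝ)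
    (hu : ∀ t, u t ∈ U) (hx : ∀ t, x t ∈ X) (hw : ∀ t, w t ∈ Wset)
    (hdyn : ∀ t, x (t + 1) = f (x t) (u t) (w t))
    (hy : ∀ t, h (x t) (u t) (w t) ∈ Y)
    -- sequence of MHE estimates
    (xh : ℕ → Fin n → ℝ) (hxh0 : xh 0 ∈ X)
    (hMHE : ∀ t : ℕ, 1 ≤ t →
      ∃ (z : ℕ → Fin n → ℝ) (v : ℕ → Fin q → ℝ),
        (∀ j, t - min t M ≤ j → j < t →
          z (j + 1) = f (z j) (u j) (v j) ∧ z j ∈ X ∧ v j ∈ Wset ∧ h (z j) (u j) (v j) ∈ Y) ∧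
        z t ∈ X ∧ z t = xh t ∧
        2 * η ^ min t M * quadNorm P2 (z (t - min t M) - xh (t - min t M))
          + ∑ j ∈ Finset.Icc 1 (min t M), η ^ (j - 1) *
              (2 * quadNorm Q (v (t - j))
                + quadNorm R (h (z (t - j)) (u (t - j)) (v (t - j))
                    - h (x (t - j)) (u (t - j)) (w (t - j))))
        ≤ 2 * η ^ min t M * quadNorm P2 (x (t - min t M) - xh (t - min t M))
          + 2 * ∑ j ∈ Finset.Icc 1 (min t M), η ^ (j - 1) * quadNorm Q (w (t - j)))
    -- generalized-eigenvalue bound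
    (lam : ℝ) (hlam0 : 0 ≤ lam)
    (hlam : ∀ v : Fin n → ℝ, quadNorm P2 v ≤ lam * quadNorm P1 v)
    -- contraction condition
    (h4lam : 1 ≤ 4 * lam)
    (ρ : ℝ) (hρ : ρ = η * (4 * lam) ^ ((1 : ℝ) / (M : ℝ))) (hρ1 : ρ < 1) :
    ∀ t : ℕ,
      Real.sqrt (quadNorm P1 (xh t - x t)) ≤
        max (4 * ρ ^ ((t : ℝ) / 2) * Real.sqrt (quadNorm P2 (xh 0 - x 0)))
          (sSup {b : ℝ | ∃ qq < t,
            b = 4 / (1 - ρ ^ ((1 : ℝ) / 4)) * ρ ^ ((qq : ℝ) / 4)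
                  * Real.sqrt (quadNorm Q (w (t - qq - 1)))}) := by
  -- basic positivity facts
  have h4l0 : (0:ℝ) ≤ 4 * lam := by linarith
  have hρ0 : 0 ≤ ρ := by
    rw [hρ]; exact mul_nonneg hη0 (Real.rpow_nonneg h4l0 _)
  have hηρ : η ≤ ρ := by
    have h1 : (1:ℝ) ≤ (4 * lam) ^ ((1:ℝ) / (M:ℝ)) := by
      have := Real.rpow_le_rpow (le_refl (0:ℝ) |>.trans zero_le_one) h4lam
        (le_of_lt (by positivity : (0:ℝ) < (1:ℝ) / (M:ℝ)))
      rwa [Real.one_rpow] at this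
    calc η = η * 1 := by ring
    _ ≤ η * (4 * lam) ^ ((1:ℝ) / (M:ℝ)) := by
        exact mul_le_mul_of_nonneg_left h1 hη0
    _ = ρ := hρ.symm
  have hρMeq : ρ ^ M = η ^ M * (4 * lam) := by
    rw [hρ, mul_pow]
    congr 1
    rw [← Real.rpow_natCast ((4 * lam) ^ ((1:ℝ) / (M:ℝ))) M, ← Real.rpow_mul h4l0]
    rw [show (1:ℝ) / (M:ℝ) * (M:ℕ) = 1 by
      field_simp]
    exact Real.rpow_one _
  -- Step A : the key per-window inequality
  have key : ∀ t : ℕ, 1 ≤ t →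
      quadNorm P1 (xh t - x t) ≤
        4 * η ^ (min t M) * quadNorm P2 (x (t - min t M) - xh (t - min t M))
          + 4 * ∑ i ∈ Finset.range (min t M), η ^ i * quadNorm Q (w (t - 1 - i)) := by
    intro t ht
    obtain ⟨z, v, hfeas, hztX, hzt, hcost⟩ := hMHE t ht
    set N := min t M with hNdef
    have hN1 : 1 ≤ N := le_min ht hM
    have hNt : N ≤ t := min_le_left t M
    set t0 := t - N with ht0def
    have ht0N : t0 + N = t := by omega
    set D : ℕ → ℝ := fun τ => quadNorm Q (v τ - w τ)
      + quadNorm R (h (z τ) (u τ) (v τ) - h (x τ) (u τ) (w τ)) with hDdef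
    -- the chained dissipation inequality
    have chain : ∀ i, i ≤ N → W (z (t0 + i)) (x (t0 + i)) ≤
        η ^ i * W (z t0) (x t0) + ∑ k ∈ Finset.range i, η ^ (i - 1 - k) * D (t0 + k) := by
      intro i
      induction i with
      | zero => intro _; simp
      | succ i ih =>
        intro hi
        have hi' : i ≤ N := Nat.le_of_succ_le hi
        have hlt : t0 + i < t := by omega
        obtain ⟨hzf, hzX, hvW, hzY⟩ := hfeas (t0 + i) (by omega) hlt
        have hd := hdiss (z (t0 + i)) (x (t0 + i)) (u (t0 + i)) (v (t0 + i)) (w (t0 + i))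
          hzX (hx _) (hu _) hvW (hw _) hzY (hy _)
        rw [← hzf, ← hdyn (t0 + i)] at hd
        have hstep : W (z (t0 + (i + 1))) (x (t0 + (i + 1)))
            ≤ η * W (z (t0 + i)) (x (t0 + i)) + D (t0 + i) := by
          have he : t0 + (i + 1) = (t0 + i) + 1 := by omega
          rw [he]
          simp only [hDdef]
          linarith [hd]
        have hW2 := ih hi'
        have hS : η * (∑ k ∈ Finset.range i, η ^ (i - 1 - k) * D (t0 + k))
            = ∑ k ∈ Finset.range i, η ^ (i - k) * D (t0 + k) := by
          rw [Finset.mul_sum]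
          apply Finset.sum_congr rfl
          intro k hk
          rw [Finset.mem_range] at hk
          rw [← mul_assoc, ← pow_succ']
          have : (i - 1 - k) + 1 = i - k := by omega
          rw [this]
        calc W (z (t0 + (i + 1))) (x (t0 + (i + 1)))
            ≤ η * W (z (t0 + i)) (x (t0 + i)) + D (t0 + i) := hstep
          _ ≤ η * (η ^ i * W (z t0) (x t0)
                + ∑ k ∈ Finset.range i, η ^ (i - 1 - k) * D (t0 + k)) + D (t0 + i) := by
              have := mul_le_mul_of_nonneg_left hW2 hη0
              linarith
          _ = η ^ (i + 1) * W (z t0) (x t0)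
                + ∑ k ∈ Finset.range (i + 1), η ^ (i + 1 - 1 - k) * D (t0 + k) := by
              simp only [Nat.add_sub_cancel]
              rw [Finset.sum_range_succ, Nat.sub_self, pow_zero, one_mul, mul_add, hS, pow_succ]
              ring
    have hchainN := chain N le_rfl
    rw [ht0N] at hchainN
    -- reflect the sum
    have hrefl : ∑ k ∈ Finset.range N, η ^ (N - 1 - k) * D (t0 + k)
        = ∑ i ∈ Finset.range N, η ^ i * D (t - 1 - i) := by
      rw [← Finset.sum_range_reflect (fun i => η ^ i * D (t - 1 - i)) N]
      apply Finset.sum_congr rfl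
      intro j hj
      rw [Finset.mem_range] at hj
      have e1 : t0 + j = t - 1 - (N - 1 - j) := by omega
      rw [e1]
    rw [hrefl] at hchainN
    -- bounds on the endpoints
    have hzt0X : z t0 ∈ X := (hfeas t0 le_rfl (by omega)).2.1
    have hWup0 : W (z t0) (x t0) ≤ quadNorm P2 (z t0 - x t0) := hWup _ _ hzt0X (hx t0)
    have hsplit : quadNorm P2 (z t0 - x t0)
        ≤ 2 * quadNorm P2 (z t0 - xh t0) + 2 * quadNorm P2 (x t0 - xh t0) := by
      have e : z t0 - x t0 = (z t0 - xh t0) - (x t0 - xh t0) := by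
        rw [sub_sub_sub_cancel_right]
      rw [e]
      exact quadNorm_sub_le hP2.posSemidef _ _
    have hlowt : quadNorm P1 (xh t - x t) ≤ W (z t) (x t) := by
      rw [← hzt]
      exact hWlow _ _ hztX (hx t)
    -- convert the cost inequality to range-sums
    have hcost' : 2 * η ^ N * quadNorm P2 (z t0 - xh t0)
        + ∑ i ∈ Finset.range N, η ^ i *
            (2 * quadNorm Q (v (t - 1 - i))
              + quadNorm R (h (z (t - 1 - i)) (u (t - 1 - i)) (v (t - 1 - i))
                  - h (x (t - 1 - i)) (u (t - 1 - i)) (w (t - 1 - i))))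
        ≤ 2 * η ^ N * quadNorm P2 (x t0 - xh t0)
          + 2 * ∑ i ∈ Finset.range N, η ^ i * quadNorm Q (w (t - 1 - i)) := by
      have e1 : ∀ (g : ℕ → ℝ), ∑ j ∈ Finset.Icc 1 N, η ^ (j - 1) * g j
          = ∑ i ∈ Finset.range N, η ^ i * g (i + 1) := by
        intro g
        rw [sum_Icc_one N (fun j => η ^ (j - 1) * g j)]
        apply Finset.sum_congr rfl
        intro i _
        simp [Nat.add_sub_cancel]
      have e2 : ∀ i : ℕ, t - (i + 1) = t - 1 - i := by intro i; omega
      calc 2 * η ^ N * quadNorm P2 (z t0 - xh t0)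
          + ∑ i ∈ Finset.range N, η ^ i *
              (2 * quadNorm Q (v (t - 1 - i))
                + quadNorm R (h (z (t - 1 - i)) (u (t - 1 - i)) (v (t - 1 - i))
                    - h (x (t - 1 - i)) (u (t - 1 - i)) (w (t - 1 - i))))
          = 2 * η ^ N * quadNorm P2 (z t0 - xh t0)
            + ∑ j ∈ Finset.Icc 1 N, η ^ (j - 1) *
                (2 * quadNorm Q (v (t - j))
                  + quadNorm R (h (z (t - j)) (u (t - j)) (v (t - j))
                      - h (x (t - j)) (u (t - j)) (w (t - j)))) := by
            rw [e1 (fun j => 2 * quadNorm Q (v (t - j))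
                  + quadNorm R (h (z (t - j)) (u (t - j)) (v (t - j))
                      - h (x (t - j)) (u (t - j)) (w (t - j))))]
            congr 1
            apply Finset.sum_congr rfl
            intro i _
            rw [e2 i]
        _ ≤ 2 * η ^ N * quadNorm P2 (x t0 - xh t0)
            + 2 * ∑ j ∈ Finset.Icc 1 N, η ^ (j - 1) * quadNorm Q (w (t - j)) := hcost
        _ = 2 * η ^ N * quadNorm P2 (x t0 - xh t0)
            + 2 * ∑ i ∈ Finset.range N, η ^ i * quadNorm Q (w (t - 1 - i)) := by
            rw [e1 (fun j => quadNorm Q (w (t - j)))]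
            congr 2
            apply Finset.sum_congr rfl
            intro i _
            rw [e2 i]
    -- termwise bound on the D-sum
    have hDsum : ∑ i ∈ Finset.range N, η ^ i * D (t - 1 - i)
        ≤ (∑ i ∈ Finset.range N, η ^ i *
            (2 * quadNorm Q (v (t - 1 - i))
              + quadNorm R (h (z (t - 1 - i)) (u (t - 1 - i)) (v (t - 1 - i))
                  - h (x (t - 1 - i)) (u (t - 1 - i)) (w (t - 1 - i)))))
          + 2 * ∑ i ∈ Finset.range N, η ^ i * quadNorm Q (w (t - 1 - i)) := by
      rw [Finset.mul_sum, ← Finset.sum_add_distrib]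
      apply Finset.sum_le_sum
      intro i _
      simp only [hDdef]
      have h1 : quadNorm Q (v (t - 1 - i) - w (t - 1 - i))
          ≤ 2 * quadNorm Q (v (t - 1 - i)) + 2 * quadNorm Q (w (t - 1 - i)) :=
        quadNorm_sub_le hQ _ _
      have h2 : 0 ≤ η ^ i := pow_nonneg hη0 i
      have := mul_le_mul_of_nonneg_left
        (show quadNorm Q (v (t - 1 - i) - w (t - 1 - i))
            + quadNorm R (h (z (t - 1 - i)) (u (t - 1 - i)) (v (t - 1 - i))
                - h (x (t - 1 - i)) (u (t - 1 - i)) (w (t - 1 - i)))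
          ≤ (2 * quadNorm Q (v (t - 1 - i))
              + quadNorm R (h (z (t - 1 - i)) (u (t - 1 - i)) (v (t - 1 - i))
                  - h (x (t - 1 - i)) (u (t - 1 - i)) (w (t - 1 - i))))
            + 2 * quadNorm Q (w (t - 1 - i)) from by linarith) h2
      linarith [this]
    -- endpoint bound scaled by η^N
    have hWterm := mul_le_mul_of_nonneg_left (hWup0.trans hsplit) (pow_nonneg hη0 N)
    have hWeq : η ^ N * (2 * quadNorm P2 (z t0 - xh t0) + 2 * quadNorm P2 (x t0 - xh t0))
        = 2 * η ^ N * quadNorm P2 (z t0 - xh t0) + 2 * η ^ N * quadNorm P2 (x t0 - xh t0) := by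
      ring
    linarith [hchainN, hlowt, hDsum, hcost', hWterm]
  -- Step B : master bound by strong induction
  have master : ∀ t : ℕ, quadNorm P1 (xh t - x t)
      ≤ 4 * ρ ^ t * quadNorm P2 (xh 0 - x 0)
        + 4 * ∑ i ∈ Finset.range t, ρ ^ i * quadNorm Q (w (t - 1 - i)) := by
    intro t
    induction t using Nat.strong_induction_on with
    | _ t ih =>
      rcases Nat.eq_zero_or_pos t with rfl | ht
      · have h1 : quadNorm P1 (xh 0 - x 0) ≤ W (xh 0) (x 0) := hWlow _ _ hxh0 (hx 0)
        have h2 := hWup _ _ hxh0 (hx 0)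
        have h3 : 0 ≤ quadNorm P2 (xh 0 - x 0) := quadNorm_nonneg hP2.posSemidef _
        simp only [pow_zero, Finset.range_zero, Finset.sum_empty]
        linarith
      · have hkey := key t ht
        by_cases hcase : t ≤ M
        · have hNt : min t M = t := min_eq_left hcase
          rw [hNt] at hkey
          simp only [Nat.sub_self] at hkey
          have e1 : quadNorm P2 (x 0 - xh 0) = quadNorm P2 (xh 0 - x 0) := by
            rw [← quadNorm_neg' P2 (xh 0 - x 0), neg_sub]
          rw [e1] at hkey
          have hB : 0 ≤ quadNorm P2 (xh 0 - x 0) := quadNorm_nonneg hP2.posSemidef _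
          have hpow : η ^ t ≤ ρ ^ t := pow_le_pow_left₀ hη0 hηρ t
          have hsum : ∑ i ∈ Finset.range t, η ^ i * quadNorm Q (w (t - 1 - i))
              ≤ ∑ i ∈ Finset.range t, ρ ^ i * quadNorm Q (w (t - 1 - i)) :=
            Finset.sum_le_sum fun i _ => mul_le_mul_of_nonneg_right
              (pow_le_pow_left₀ hη0 hηρ i) (quadNorm_nonneg hQ _)
          have h5 := mul_le_mul_of_nonneg_right hpow hB
          linarith
        · have hNt : min t M = M := min_eq_right (le_of_lt (not_le.1 hcase))
          rw [hNt] at hkey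
          set t0 := t - M with ht0def
          have ht0t : t0 < t := by omega
          have hIH := ih t0 ht0t
          have hB : 0 ≤ quadNorm P2 (xh 0 - x 0) := quadNorm_nonneg hP2.posSemidef _
          have hP2P1 : quadNorm P2 (x t0 - xh t0) ≤ lam * quadNorm P1 (xh t0 - x t0) := by
            have h1 := hlam (x t0 - xh t0)
            have e : quadNorm P1 (x t0 - xh t0) = quadNorm P1 (xh t0 - x t0) := by
              rw [← quadNorm_neg' P1 (xh t0 - x t0), neg_sub]
            rwa [e] at h1
          have c1 : quadNorm P2 (x t0 - xh t0)
              ≤ lam * (4 * ρ ^ t0 * quadNorm P2 (xh 0 - x 0)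
                + 4 * ∑ i ∈ Finset.range t0, ρ ^ i * quadNorm Q (w (t0 - 1 - i))) :=
            hP2P1.trans (mul_le_mul_of_nonneg_left hIH hlam0)
          have c2 : 4 * η ^ M * quadNorm P2 (x t0 - xh t0)
              ≤ ρ ^ M * (4 * ρ ^ t0 * quadNorm P2 (xh 0 - x 0)
                + 4 * ∑ i ∈ Finset.range t0, ρ ^ i * quadNorm Q (w (t0 - 1 - i))) := by
            have h2 := mul_le_mul_of_nonneg_left c1
              (by positivity : (0:ℝ) ≤ 4 * η ^ M)
            calc 4 * η ^ M * quadNorm P2 (x t0 - xh t0)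
                ≤ 4 * η ^ M * (lam * (4 * ρ ^ t0 * quadNorm P2 (xh 0 - x 0)
                  + 4 * ∑ i ∈ Finset.range t0, ρ ^ i * quadNorm Q (w (t0 - 1 - i)))) := h2
              _ = ρ ^ M * (4 * ρ ^ t0 * quadNorm P2 (xh 0 - x 0)
                  + 4 * ∑ i ∈ Finset.range t0, ρ ^ i * quadNorm Q (w (t0 - 1 - i))) := by
                  rw [hρMeq]; ring
          have c3 : ρ ^ M * ρ ^ t0 = ρ ^ t := by
            rw [← pow_add]
            congr 1
            omega
          have c4 : ρ ^ M * ∑ i ∈ Finset.range t0, ρ ^ i * quadNorm Q (w (t0 - 1 - i))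
              = ∑ i ∈ Finset.range t0, ρ ^ (M + i) * quadNorm Q (w (t - 1 - (M + i))) := by
            rw [Finset.mul_sum]
            apply Finset.sum_congr rfl
            intro i _
            rw [← mul_assoc, ← pow_add]
            have e : t0 - 1 - i = t - 1 - (M + i) := by omega
            rw [e]
          have c5 : ∑ i ∈ Finset.range t, ρ ^ i * quadNorm Q (w (t - 1 - i))
              = ∑ i ∈ Finset.range M, ρ ^ i * quadNorm Q (w (t - 1 - i))
                + ∑ i ∈ Finset.range t0, ρ ^ (M + i) * quadNorm Q (w (t - 1 - (M + i))) := by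
            have := Finset.sum_range_add (fun i => ρ ^ i * quadNorm Q (w (t - 1 - i))) M t0
            rw [show M + t0 = t by omega] at this
            exact this
          have hsumM : ∑ i ∈ Finset.range M, η ^ i * quadNorm Q (w (t - 1 - i))
              ≤ ∑ i ∈ Finset.range M, ρ ^ i * quadNorm Q (w (t - 1 - i)) :=
            Finset.sum_le_sum fun i _ => mul_le_mul_of_nonneg_right
              (pow_le_pow_left₀ hη0 hηρ i) (quadNorm_nonneg hQ _)
          have c6 : ρ ^ M * (4 * ρ ^ t0 * quadNorm P2 (xh 0 - x 0)
              + 4 * ∑ i ∈ Finset.range t0, ρ ^ i * quadNorm Q (w (t0 - 1 - i)))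
              = 4 * ρ ^ t * quadNorm P2 (xh 0 - x 0)
                + 4 * (ρ ^ M * ∑ i ∈ Finset.range t0, ρ ^ i * quadNorm Q (w (t0 - 1 - i))) := by
            rw [mul_add]
            congr 1
            · rw [← c3]; ring
            · ring
          rw [c4] at c6
          linarith [hkey, c2, c6, c5, hsumM]
  -- Step C : conclusion
  intro t
  have hmt := master t
  have hB : 0 ≤ quadNorm P2 (xh 0 - x 0) := quadNorm_nonneg hP2.posSemidef _
  set B := quadNorm P2 (xh 0 - x 0) with hBdef
  set s := ρ ^ ((1:ℝ)/4) with hsdef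
  have hs0 : 0 ≤ s := Real.rpow_nonneg hρ0 _
  have hs1 : s < 1 := Real.rpow_lt_one hρ0 hρ1 (by norm_num)
  have h1s : (0:ℝ) < 1 - s := by linarith
  have hs4 : s ^ (4:ℕ) = ρ := by
    rw [hsdef, ← Real.rpow_natCast (ρ ^ ((1:ℝ)/4)) 4, ← Real.rpow_mul hρ0]
    norm_num
  have hρq : ∀ k : ℕ, ρ ^ ((k:ℝ)/4) = s ^ k := by
    intro k
    rw [hsdef, ← Real.rpow_natCast (ρ ^ ((1:ℝ)/4)) k, ← Real.rpow_mul hρ0]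
    congr 1; ring
  have harm1sq : (ρ ^ ((t:ℝ)/2)) ^ (2:ℕ) = ρ ^ t := by
    rw [← Real.rpow_natCast (ρ ^ ((t:ℝ)/2)) 2, ← Real.rpow_mul hρ0,
      show (t:ℝ)/2 * ((2:ℕ):ℝ) = ((t:ℕ):ℝ) by push_cast; ring, Real.rpow_natCast]
  have harm1 : Real.sqrt (16 * ρ ^ t * B) = 4 * ρ ^ ((t:ℝ)/2) * Real.sqrt B := by
    rw [show 16 * ρ ^ t * B = (4 * ρ ^ ((t:ℝ)/2) * Real.sqrt B) ^ 2 by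
      rw [mul_pow, mul_pow, Real.sq_sqrt hB, harm1sq]; norm_num]
    exact Real.sqrt_sq (by positivity)
  rcases Nat.eq_zero_or_pos t with rfl | ht
  · have h0 : quadNorm P1 (xh 0 - x 0) ≤ 16 * ρ ^ 0 * B := by
      simp only [Finset.range_zero, Finset.sum_empty, pow_zero] at hmt ⊢
      linarith
    have h1 := Real.sqrt_le_sqrt h0
    rw [harm1] at h1
    exact le_trans h1 (le_max_left _ _)
  · obtain ⟨qs, hqsmem, hqsmax⟩ := Finset.exists_max_image (Finset.range t)
      (fun k => s ^ (2*k) * quadNorm Q (w (t - 1 - k))) ⟨0, Finset.mem_range.2 ht⟩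
    have hqsmax' : ∀ i ∈ Finset.range t, s ^ (2*i) * quadNorm Q (w (t - 1 - i))
        ≤ s ^ (2*qs) * quadNorm Q (w (t - 1 - qs)) := fun i hi => hqsmax i hi
    set F := s ^ (2*qs) * quadNorm Q (w (t - 1 - qs)) with hFdef
    have hF0 : 0 ≤ F := mul_nonneg (pow_nonneg hs0 _) (quadNorm_nonneg hQ _)
    have hterm : ∀ i ∈ Finset.range t, ρ ^ i * quadNorm Q (w (t - 1 - i)) ≤ (s^2)^i * F := by
      intro i hi
      have e : ρ ^ i = (s^2)^i * s^(2*i) := by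
        rw [← hs4, ← pow_mul, ← pow_mul, ← pow_add]
        congr 1; omega
      calc ρ ^ i * quadNorm Q (w (t-1-i))
          = (s^2)^i * (s^(2*i) * quadNorm Q (w (t-1-i))) := by rw [e]; ring
        _ ≤ (s^2)^i * F := mul_le_mul_of_nonneg_left (hqsmax' i hi) (by positivity)
    have hS2 : (0:ℝ) ≤ s^2 := by positivity
    have hs21 : s^2 < 1 := by nlinarith
    have hgeo : ∑ i ∈ Finset.range t, (s^2)^i ≤ 1/(1-s^2) := geom_le' hS2 hs21 t
    have hSsum : ∑ i ∈ Finset.range t, ρ ^ i * quadNorm Q (w (t-1-i)) ≤ (1/(1-s^2)) * F := by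
      calc ∑ i ∈ Finset.range t, ρ ^ i * quadNorm Q (w (t-1-i))
          ≤ ∑ i ∈ Finset.range t, (s^2)^i * F := Finset.sum_le_sum hterm
        _ = (∑ i ∈ Finset.range t, (s^2)^i) * F := by rw [Finset.sum_mul]
        _ ≤ (1/(1-s^2)) * F := mul_le_mul_of_nonneg_right hgeo hF0
    set c := 4/(1-s) with hcdef
    have hc0 : (0:ℝ) < c := by positivity
    have h1s2 : (0:ℝ) < 1 - s^2 := by nlinarith
    have hcF : 8 * ((1/(1-s^2)) * F) ≤ c^2 * F := by
      have h8 : 8 * (1/(1-s^2)) ≤ c^2 := by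
        have e : c^2 = 16/(1-s)^2 := by rw [hcdef, div_pow]; norm_num
        rw [e, mul_one_div, div_le_div_iff₀ h1s2 (by positivity)]
        have hp : (0:ℝ) ≤ (1-s)*(1+3*s) := mul_nonneg h1s.le (by linarith)
        have hq' : 16*(1-s^2) - 8*(1-s)^2 = 8*((1-s)*(1+3*s)) := by ring
        linarith [hp, hq']
      calc 8 * ((1/(1-s^2)) * F) = (8 * (1/(1-s^2))) * F := by ring
        _ ≤ c^2 * F := mul_le_mul_of_nonneg_right h8 hF0
    rcases le_total (4 * ρ^t * B)
        (4 * ∑ i ∈ Finset.range t, ρ ^ i * quadNorm Q (w (t-1-i))) with hc1 | hc1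
    · -- disturbance term dominates
      have hE : quadNorm P1 (xh t - x t) ≤ c^2 * F := by
        have h1 : quadNorm P1 (xh t - x t)
            ≤ 8 * ∑ i ∈ Finset.range t, ρ ^ i * quadNorm Q (w (t-1-i)) := by linarith
        have h2 := mul_le_mul_of_nonneg_left hSsum (by norm_num : (0:ℝ) ≤ 8)
        linarith
      have e : c^2 * F = (c * s^qs * Real.sqrt (quadNorm Q (w (t-1-qs))))^2 := by
        rw [hFdef, mul_pow, mul_pow, Real.sq_sqrt (quadNorm_nonneg hQ _),
          show (s^qs)^2 = s^(2*qs) from by rw [← pow_mul, Nat.mul_comm]]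
        ring
      have hsq : Real.sqrt (quadNorm P1 (xh t - x t))
          ≤ c * s^qs * Real.sqrt (quadNorm Q (w (t-1-qs))) := by
        have h3 := Real.sqrt_le_sqrt hE
        rwa [e, Real.sqrt_sq (by positivity)] at h3
      have hmem : c * s^qs * Real.sqrt (quadNorm Q (w (t-1-qs))) ∈
          {b : ℝ | ∃ qq < t,
            b = c * ρ ^ ((qq:ℝ)/4) * Real.sqrt (quadNorm Q (w (t - qq - 1)))} := by
        refine ⟨qs, Finset.mem_range.1 hqsmem, ?_⟩
        rw [hρq qs, show t - qs - 1 = t - 1 - qs from by omega]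
      have hbdd : BddAbove {b : ℝ | ∃ qq < t,
          b = c * ρ ^ ((qq:ℝ)/4) * Real.sqrt (quadNorm Q (w (t - qq - 1)))} := by
        apply Set.Finite.bddAbove
        apply Set.Finite.subset (Set.Finite.image
          (fun qq : ℕ => c * ρ ^ ((qq:ℝ)/4) * Real.sqrt (quadNorm Q (w (t - qq - 1))))
          (Set.finite_Iio t))
        rintro b ⟨qq, hqq, rfl⟩
        exact ⟨qq, hqq, rfl⟩
      exact le_trans (hsq.trans (le_csSup hbdd hmem)) (le_max_right _ _)
    · -- initial-error term dominates
      have hρtB : (0:ℝ) ≤ ρ^t * B := by positivity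
      have hE : quadNorm P1 (xh t - x t) ≤ 16 * ρ^t * B := by linarith
      have h1 := Real.sqrt_le_sqrt hE
      rw [harm1] at h1
      exact le_trans h1 (le_max_left _ _)
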